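/- arXiv:2105.06112 — 4 statements merged into one kernel-verified Lean document; each statement's English description precedes it below -/
import Mathlib

section
/- Let δ > τ > 0 and r > 0, and define E(t) := |½ u'(t) + τ u''(t)|² + (τ/(δ+τ)) r² |u(t) + (δ+τ) u'(t)|² + ((δ-τ)/(2(δ+τ))) r² |u(t)|² + ¼ |u'(t)|² for a C³ function u : [0,∞) → ℂ satisfying τ u''' + u'' + r² u + (δ+τ) r² u' = f. Then (1/2) E'(t) = -(τ/2)|u''(t)|² - ((δ-τ)/2) r² |u'(t)|² + Re( f(t) · conj(½ u'(t) + τ u''(t)) ). -/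
/-!
By the chain rule for `‖·‖²`, half the derivative of the energy along `(u, u', u'')` is a sum of
real inner products (`mgtEnergyRate`) that involves `u'''` only through `½u'' + τu'''`. Eliminating
`τu'''` with the equation turns the claim into a polynomial identity in the real and imaginary parts
of `u, u', u''`.
-/

open ComplexConjugate
open scoped RealInnerProductSpace

noncomputable def mgtEnergy (τ δ r : ℝ) (a b c : ℂ) : ℝ :=
  ‖(1/2 : ℂ) * b + (τ : ℂ) * c‖^2
    + (τ / (δ + τ)) * r^2 * ‖a + ((δ + τ : ℝ) : ℂ) * b‖^2
    + ((δ - τ) / (2 * (δ + τ))) * r^2 * ‖a‖^2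
    + (1/4) * ‖b‖^2

noncomputable def mgtEnergyRate (τ δ r : ℝ) (a b c w : ℂ) : ℝ :=
  ⟪(1/2 : ℂ) * b + (τ : ℂ) * c, (1/2 : ℂ) * c + (τ : ℂ) * w⟫
    + (τ / (δ + τ)) * r^2 * ⟪a + ((δ + τ : ℝ) : ℂ) * b, b + ((δ + τ : ℝ) : ℂ) * c⟫
    + ((δ - τ) / (2 * (δ + τ))) * r^2 * ⟪a, b⟫
    + (1/4) * ⟪b, c⟫

theorem hasDerivAt_mgtEnergy (τ δ r : ℝ) {a b c : ℝ → ℂ} {w : ℂ} {t : ℝ}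
    (ha : HasDerivAt a (b t) t) (hb : HasDerivAt b (c t) t) (hc : HasDerivAt c w t) :
    HasDerivAt (fun s => mgtEnergy τ δ r (a s) (b s) (c s))
      (2 * mgtEnergyRate τ δ r (a t) (b t) (c t) w) t := by
  have hv := ((hb.const_mul (1/2 : ℂ)).add (hc.const_mul (τ : ℂ))).norm_sq
  have hz := (ha.add (hb.const_mul ((δ + τ : ℝ) : ℂ))).norm_sq
  refine (((hv.add (hz.const_mul (τ / (δ + τ) * r^2))).add
    (ha.norm_sq.const_mul ((δ - τ) / (2 * (δ + τ)) * r^2))).add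
    (hb.norm_sq.const_mul (1/4))).congr_deriv ?_
  simp only [mgtEnergyRate, Pi.add_apply]
  ring

theorem mgtEnergyRate_eq {τ δ r : ℝ} (hδτ : δ + τ ≠ 0) {a b c w f : ℂ}
    (h : (τ : ℂ) * w + c + ((r^2 : ℝ) : ℂ) * a + (((δ + τ) * r^2 : ℝ) : ℂ) * b = f) :
    mgtEnergyRate τ δ r a b c w =
      -(τ/2) * ‖c‖^2 - ((δ - τ)/2) * r^2 * ‖b‖^2
        + (f * conj ((1/2 : ℂ) * b + (τ : ℂ) * c)).re := by
  subst h
  simp only [mgtEnergyRate, Complex.inner, ← Complex.normSq_eq_norm_sq, Complex.normSq_apply,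
    Complex.mul_re, Complex.add_re, Complex.add_im, Complex.mul_im,
    Complex.conj_re, Complex.conj_im, Complex.ofReal_re, Complex.ofReal_im,
    Complex.div_re, Complex.div_im, Complex.one_re, Complex.one_im, Complex.re_ofNat, Complex.im_ofNat]
  field_simp
  ring

theorem stmt_2_general (τ δ r : ℝ) (hτ : 0 < τ) (hτδ : τ < δ)
    (u f : ℝ → ℂ) (hu : ContDiff ℝ 3 u)
    (heq : ∀ t : ℝ,
      (τ : ℂ) * deriv (deriv (deriv u)) t + deriv (deriv u) t
        + ((r^2 : ℝ) : ℂ) * u t + (((δ + τ) * r^2 : ℝ) : ℂ) * deriv u t = f t)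
    (E : ℝ → ℝ)
    (hE : E = fun t =>
      ‖(1/2 : ℂ) * deriv u t + (τ : ℂ) * deriv (deriv u) t‖^2
        + (τ / (δ + τ)) * r^2 * ‖u t + ((δ + τ : ℝ) : ℂ) * deriv u t‖^2
        + ((δ - τ) / (2 * (δ + τ))) * r^2 * ‖u t‖^2
        + (1/4) * ‖deriv u t‖^2) :
    ∀ t : ℝ,
      (1/2) * deriv E t =
        -(τ/2) * ‖deriv (deriv u) t‖^2 - ((δ - τ)/2) * r^2 * ‖deriv u t‖^2
          + (f t * (starRingEnd ℂ)
              ((1/2 : ℂ) * deriv u t + (τ : ℂ) * deriv (deriv u) t)).re := by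
  intro t
  have hu₀ : Differentiable ℝ u := hu.differentiable (by norm_num)
  have hu₁ : Differentiable ℝ (deriv u) := by
    simpa using hu.differentiable_iteratedDeriv 1 (by norm_num)
  have hu₂ : Differentiable ℝ (deriv (deriv u)) := by
    simpa [iteratedDeriv_succ] using hu.differentiable_iteratedDeriv 2 (by norm_num)
  have hE' : E = fun s => mgtEnergy τ δ r (u s) (deriv u s) (deriv (deriv u) s) := hE
  rw [hE', (hasDerivAt_mgtEnergy τ δ r (hu₀ t).hasDerivAt (hu₁ t).hasDerivAt
    (hu₂ t).hasDerivAt).deriv, mgtEnergyRate_eq (by linarith) (heq t)]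
  ring

theorem stmt_2 (τ δ r : ℝ) (hτ : 0 < τ) (hτδ : τ < δ) (hr : 0 < r)
    (u f : ℝ → ℂ) (hu : ContDiff ℝ 3 u) (hf : Continuous f)
    (heq : ∀ t : ℝ,
      (τ : ℂ) * deriv (deriv (deriv u)) t + deriv (deriv u) t
        + ((r^2 : ℝ) : ℂ) * u t + (((δ + τ) * r^2 : ℝ) : ℂ) * deriv u t = f t)
    (E : ℝ → ℝ)
    (hE : E = fun t =>
      ‖(1/2 : ℂ) * deriv u t + (τ : ℂ) * deriv (deriv u) t‖^2
        + (τ / (δ + τ)) * r^2 * ‖u t + ((δ + τ : ℝ) : ℂ) * deriv u t‖^2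
        + ((δ - τ) / (2 * (δ + τ))) * r^2 * ‖u t‖^2
        + (1/4) * ‖deriv u t‖^2) :
    ∀ t : ℝ,
      (1/2) * deriv E t =
        -(τ/2) * ‖deriv (deriv u) t‖^2 - ((δ - τ)/2) * r^2 * ‖deriv u t‖^2
          + (f t * (starRingEnd ℂ)
              ((1/2 : ℂ) * deriv u t + (τ : ℂ) * deriv (deriv u) t)).re :=
  stmt_2_general τ δ r hτ hτδ u f hu heq E hE
end

section
/- Let n ≥ 3 and c > 0. There exists C > 0 such that for all t ≥ 0, ∫_{{ξ ∈ ℝⁿ : |ξ| ≤ 1}} |ξ|^{-2} sin²(|ξ| t) e^{-c|ξ|² t} dξ ≤ C (1+t)^{1 - n/2}. -/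
/-! On the unit ball `‖ξ‖² ≤ 1`, so `e^{-c‖ξ‖²t} ≤ e^c e^{-c(1+t)‖ξ‖²}`; together with `sin² ≤ 1`
this dominates the integrand by `e^c ‖ξ‖⁻² e^{-c(1+t)‖ξ‖²}`. Its integral over all of `ℝⁿ` is finite,
since `‖ξ‖⁻²` is integrable near the origin for `n ≥ 3`, and the substitution `ξ ↦ √(1+t) ξ` shows
it equals `(1+t)^{1-n/2}` times its value at `t = 0`. -/

open MeasureTheory Real Set Module

section NormRpowGaussian

variable {E : Type*} [NormedAddCommGroup E] [NormedSpace ℝ E] [FiniteDimensional ℝ E]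
  [MeasurableSpace E] [BorelSpace E] (μ : Measure E) [μ.IsAddHaarMeasure]

theorem integrable_norm_rpow_mul_exp_neg_mul_sq [Nontrivial E] {p c : ℝ} (hc : 0 < c)
    (hp : -(finrank ℝ E : ℝ) < p) :
    Integrable (fun x : E => ‖x‖ ^ p * exp (-c * ‖x‖ ^ 2)) μ := by
  refine (integrable_fun_norm_addHaar μ (f := fun r => r ^ p * exp (-c * r ^ 2))).2 ?_
  have hdim : ((finrank ℝ E - 1 : ℕ) : ℝ) = finrank ℝ E - 1 := by
    rw [Nat.cast_sub finrank_pos, Nat.cast_one]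
  refine (integrableOn_rpow_mul_exp_neg_mul_sq hc (s := p + (finrank ℝ E - 1))
    (by linarith)).congr_fun (fun r (hr : 0 < r) => ?_) measurableSet_Ioi
  rw [smul_eq_mul, ← mul_assoc, ← rpow_natCast, hdim, ← rpow_add hr, add_comm]

theorem integral_norm_rpow_mul_exp_neg_mul_mul_sq (p c : ℝ) {s : ℝ} (hs : 0 < s) :
    ∫ x, ‖x‖ ^ p * exp (-(c * s) * ‖x‖ ^ 2) ∂μ
      = s ^ (-(p + finrank ℝ E) / 2) * ∫ x, ‖x‖ ^ p * exp (-c * ‖x‖ ^ 2) ∂μ := by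
  have hscale : ∀ x : E, ‖x‖ ^ p * exp (-(c * s) * ‖x‖ ^ 2)
      = s ^ (-p / 2) * (‖√s • x‖ ^ p * exp (-c * ‖√s • x‖ ^ 2)) := fun x => by
    have hcancel : s ^ (-p / 2) * √s ^ p = 1 := by
      rw [sqrt_eq_rpow, ← rpow_mul hs.le, ← rpow_add hs]
      ring_nf
      exact rpow_zero s
    rw [norm_smul, norm_of_nonneg (sqrt_nonneg s), mul_rpow (sqrt_nonneg s) (norm_nonneg x),
      mul_pow, sq_sqrt hs.le, ← mul_assoc, ← mul_assoc, hcancel]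
    ring_nf
  simp_rw [hscale]
  rw [integral_const_mul, Measure.integral_comp_smul_of_nonneg μ
      (fun y : E => ‖y‖ ^ p * exp (-c * ‖y‖ ^ 2)) √s (hR := sqrt_nonneg s), smul_eq_mul,
    ← mul_assoc, sqrt_eq_rpow, ← rpow_natCast, ← rpow_mul hs.le, ← rpow_neg hs.le, ← rpow_add hs]
  ring_nf

theorem integral_norm_rpow_mul_exp_neg_mul_sq_pos [Nontrivial E] {p c : ℝ} (hc : 0 < c)
    (hp : -(finrank ℝ E : ℝ) < p) :
    0 < ∫ x, ‖x‖ ^ p * exp (-c * ‖x‖ ^ 2) ∂μ := by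
  refine (integral_pos_iff_support_of_nonneg (fun x => by positivity)
    (integrable_norm_rpow_mul_exp_neg_mul_sq μ hc hp)).2 ?_
  refine (isOpen_compl_singleton.measure_pos μ (exists_ne 0)).trans_le (measure_mono ?_)
  intro x (hx : x ≠ 0)
  exact (mul_pos (rpow_pos_of_pos (norm_pos_iff.2 hx) p) (exp_pos _)).ne'

end NormRpowGaussian

theorem rpow_neg_two_mul_sin_sq_mul_exp_le {r t c : ℝ} (hr₀ : 0 ≤ r) (hr₁ : r ≤ 1) (hc : 0 ≤ c) :
    r ^ (-(2:ℝ)) * sin (r * t) ^ 2 * exp (-c * r ^ 2 * t)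
      ≤ exp c * (r ^ (-(2:ℝ)) * exp (-(c * (1 + t)) * r ^ 2)) := by
  have hexp : exp (-c * r ^ 2 * t) ≤ exp c * exp (-(c * (1 + t)) * r ^ 2) := by
    rw [← exp_add]
    gcongr
    nlinarith [mul_le_mul_of_nonneg_left (pow_le_one₀ hr₀ hr₁ : r ^ 2 ≤ 1) hc]
  calc r ^ (-(2:ℝ)) * sin (r * t) ^ 2 * exp (-c * r ^ 2 * t)
      ≤ r ^ (-(2:ℝ)) * 1 * (exp c * exp (-(c * (1 + t)) * r ^ 2)) := by
        gcongr
        exact sin_sq_le_one _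
    _ = exp c * (r ^ (-(2:ℝ)) * exp (-(c * (1 + t)) * r ^ 2)) := by ring

theorem stmt_8 (n : ℕ) (hn : 3 ≤ n) (c : ℝ) (hc : 0 < c) :
    ∃ C > (0:ℝ), ∀ t ≥ (0:ℝ),
      (∫ ξ in Metric.closedBall (0 : EuclideanSpace ℝ (Fin n)) 1,
          ‖ξ‖ ^ (-(2:ℝ)) * Real.sin (‖ξ‖ * t)^2 * Real.exp (-c * ‖ξ‖^2 * t))
        ≤ C * (1 + t) ^ (1 - (n:ℝ)/2) := by
  have : Nonempty (Fin n) := ⟨⟨0, by omega⟩⟩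
  have hp : -(finrank ℝ (EuclideanSpace ℝ (Fin n)) : ℝ) < -2 := by
    rw [finrank_euclideanSpace_fin]
    have : (3 : ℝ) ≤ n := by exact_mod_cast hn
    linarith
  set B := ∫ ξ : EuclideanSpace ℝ (Fin n), ‖ξ‖ ^ (-(2:ℝ)) * exp (-c * ‖ξ‖ ^ 2)
  refine ⟨exp c * B, mul_pos (exp_pos c) (integral_norm_rpow_mul_exp_neg_mul_sq_pos _ hc hp),
    fun t ht => ?_⟩
  have hs : 0 < 1 + t := by linarith
  have hdom := (integrable_norm_rpow_mul_exp_neg_mul_sq volume (by positivity : 0 < c * (1 + t))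
    hp).const_mul (exp c)
  calc _ ≤ ∫ ξ in Metric.closedBall (0 : EuclideanSpace ℝ (Fin n)) 1,
          exp c * (‖ξ‖ ^ (-(2:ℝ)) * exp (-(c * (1 + t)) * ‖ξ‖ ^ 2)) := by
        refine integral_mono_of_nonneg (ae_of_all _ fun ξ => by positivity) hdom.restrict ?_
        filter_upwards [ae_restrict_mem measurableSet_closedBall] with ξ hξ
        exact rpow_neg_two_mul_sin_sq_mul_exp_le (norm_nonneg ξ) (mem_closedBall_zero_iff.1 hξ) hc.le
    _ ≤ ∫ ξ : EuclideanSpace ℝ (Fin n),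
          exp c * (‖ξ‖ ^ (-(2:ℝ)) * exp (-(c * (1 + t)) * ‖ξ‖ ^ 2)) :=
        setIntegral_le_integral hdom (ae_of_all _ fun ξ => by positivity)
    _ = exp c * B * (1 + t) ^ (1 - (n:ℝ)/2) := by
        rw [integral_const_mul, integral_norm_rpow_mul_exp_neg_mul_mul_sq _ _ _ hs,
          finrank_euclideanSpace_fin, show -(-(2:ℝ) + n) / 2 = 1 - n / 2 by ring]
        ring
end

section
/- Let n = 2 and c > 0. There exists C > 0 such that for all t ≥ 0, ∫_{{ξ ∈ ℝ² : |ξ| ≤ 1}} |ξ|^{-2} sin²(|ξ| t) e^{-c|ξ|² t} dξ ≤ C log(e + t). -/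
open MeasureTheory

/-! Since `sin² x ≤ min (1, x²) ≤ 2x² / (1 + x²)` and the exponential factor is at most `1`,
the integrand is bounded by the radial function `2t² / (1 + t²|ξ|²)`. In polar coordinates
`dξ = 2π r dr`, and `2t² r / (1 + t² r²)` is the derivative of `log (1 + t² r²)`,
so the integral is at most `2π log (1 + t²) ≤ 4π log (e + t)`. -/

open Set Metric Real

theorem sin_sq_le_two_mul_sq_div_one_add_sq (x : ℝ) : sin x ^ 2 ≤ 2 * x ^ 2 / (1 + x ^ 2) := by
  rw [le_div_iff₀ (by positivity)]
  nlinarith [sin_sq_le_one x, sin_sq_le_sq (x := x), sq_nonneg x]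

theorem rpow_neg_two_mul_sin_sq_le (t : ℝ) {r : ℝ} (hr : 0 ≤ r) :
    r ^ (-(2:ℝ)) * sin (r * t) ^ 2 ≤ 2 * t ^ 2 / (1 + t ^ 2 * r ^ 2) := by
  rcases hr.eq_or_lt with rfl | hr
  · rw [zero_rpow (by norm_num), zero_mul]; positivity
  calc r ^ (-(2:ℝ)) * sin (r * t) ^ 2
      ≤ (r ^ 2)⁻¹ * (2 * (r * t) ^ 2 / (1 + (r * t) ^ 2)) := by
        rw [rpow_neg hr.le, rpow_two]
        gcongr
        exact sin_sq_le_two_mul_sq_div_one_add_sq _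
    _ = 2 * t ^ 2 / (1 + t ^ 2 * r ^ 2) := by field_simp

theorem setIntegral_closedBall_fun_norm_addHaar {E F : Type*} [NormedAddCommGroup E]
    [NormedSpace ℝ E] [Nontrivial E] [FiniteDimensional ℝ E] [MeasurableSpace E] [BorelSpace E]
    [NormedAddCommGroup F] [NormedSpace ℝ F]
    (μ : Measure E) [μ.IsAddHaarMeasure] (f : ℝ → F) (R : ℝ) :
    ∫ x in closedBall 0 R, f ‖x‖ ∂μ =
      Module.finrank ℝ E • μ.real (ball 0 1) •
        ∫ y in Ioc 0 R, y ^ (Module.finrank ℝ E - 1) • f y := by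
  have hball : (closedBall (0 : E) R).indicator (fun x => f ‖x‖) =
      fun x => (Iic R).indicator f ‖x‖ := by
    ext x; by_cases h : ‖x‖ ≤ R <;> simp [indicator, h]
  have hIoc : (fun y : ℝ => y ^ (Module.finrank ℝ E - 1) • (Iic R).indicator f y) =
      (Iic R).indicator fun y => y ^ (Module.finrank ℝ E - 1) • f y := by
    ext y; by_cases h : y ≤ R <;> simp [indicator, h]
  rw [← integral_indicator measurableSet_closedBall, hball, integral_fun_norm_addHaar, hIoc,
    setIntegral_indicator measurableSet_Iic, Ioi_inter_Iic]

theorem integral_mul_two_sq_div_one_add_sq_mul_sq (t : ℝ) :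
    ∫ y in (0:ℝ)..1, y * (2 * t ^ 2 / (1 + t ^ 2 * y ^ 2)) = log (1 + t ^ 2) := by
  have hderiv : ∀ y ∈ uIcc (0:ℝ) 1, HasDerivAt (fun y => log (1 + t ^ 2 * y ^ 2))
      (y * (2 * t ^ 2 / (1 + t ^ 2 * y ^ 2))) y := by
    intro y _
    convert ((hasDerivAt_pow 2 y).const_mul (t ^ 2)).const_add 1 |>.log (by positivity) using 1
    field_simp
    ring
  rw [intervalIntegral.integral_eq_sub_of_hasDerivAt hderiv]
  · simp
  · exact Continuous.intervalIntegrable (by fun_prop (disch := intro; positivity)) _ _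

theorem log_one_add_sq_le_two_mul_log_exp_one_add {t : ℝ} (ht : 0 ≤ t) :
    log (1 + t ^ 2) ≤ 2 * log (exp 1 + t) := by
  have he : 1 ≤ exp 1 := one_le_exp zero_le_one
  calc log (1 + t ^ 2) ≤ log ((exp 1 + t) ^ 2) := log_le_log (by positivity) (by nlinarith)
    _ = 2 * log (exp 1 + t) := by rw [log_pow]; norm_num

theorem stmt_9 (c : ℝ) (hc : 0 < c) :
    ∃ C > (0:ℝ), ∀ t ≥ (0:ℝ),
      (∫ ξ in Metric.closedBall (0 : EuclideanSpace ℝ (Fin 2)) 1,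
          ‖ξ‖ ^ (-(2:ℝ)) * Real.sin (‖ξ‖ * t)^2 * Real.exp (-c * ‖ξ‖^2 * t))
        ≤ C * Real.log (Real.exp 1 + t) := by
  refine ⟨4 * π, by positivity, fun t ht => ?_⟩
  have hmajorant : ∀ ξ : EuclideanSpace ℝ (Fin 2),
      ‖ξ‖ ^ (-(2:ℝ)) * sin (‖ξ‖ * t) ^ 2 * exp (-c * ‖ξ‖ ^ 2 * t) ≤
        2 * t ^ 2 / (1 + t ^ 2 * ‖ξ‖ ^ 2) := fun ξ => by
    have hdamping : exp (-c * ‖ξ‖ ^ 2 * t) ≤ 1 := by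
      have := mul_nonneg (mul_nonneg hc.le (sq_nonneg ‖ξ‖)) ht
      exact exp_le_one_iff.2 (by linarith)
    exact (mul_le_of_le_one_right (by positivity) hdamping).trans
      (rpow_neg_two_mul_sin_sq_le t (norm_nonneg ξ))
  have hintegrable : IntegrableOn (fun ξ : EuclideanSpace ℝ (Fin 2) =>
      2 * t ^ 2 / (1 + t ^ 2 * ‖ξ‖ ^ 2)) (closedBall 0 1) :=
    ContinuousOn.integrableOn_compact (isCompact_closedBall 0 1)
      (Continuous.continuousOn (by fun_prop (disch := intro; positivity)))
  calc _ ≤ ∫ ξ in closedBall (0 : EuclideanSpace ℝ (Fin 2)) 1,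
          2 * t ^ 2 / (1 + t ^ 2 * ‖ξ‖ ^ 2) :=
        integral_mono_of_nonneg (ae_of_all _ fun ξ => by positivity) hintegrable
          (ae_of_all _ hmajorant)
    _ = 2 * π * log (1 + t ^ 2) := by
        rw [setIntegral_closedBall_fun_norm_addHaar volume
            (fun r => 2 * t ^ 2 / (1 + t ^ 2 * r ^ 2)),
          ← intervalIntegral.integral_of_le zero_le_one]
        simp [Measure.real, integral_mul_two_sq_div_one_add_sq_mul_sq, mul_assoc, pi_nonneg]
    _ ≤ 4 * π * log (exp 1 + t) := by
        nlinarith [log_one_add_sq_le_two_mul_log_exp_one_add ht, pi_pos]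
end

section
/- For every ε₀ ∈ (0, 1/2) there exists C > 0 such that for all t ≥ 0, ∫₀ᵗ (log(e + t - σ))^{1/2} (1 + σ)^{-3/2 + ε₀} dσ ≤ C (log(e + t))^{1/2}. -/
theorem stmt_12 (ε₀ : ℝ) (hε : ε₀ ∈ Set.Ioo (0:ℝ) (1/2)) :
    ∃ C > (0:ℝ), ∀ t ≥ (0:ℝ),
      (∫ σ in (0:ℝ)..t,
          (Real.log (Real.exp 1 + t - σ)) ^ ((1:ℝ)/2) * (1 + σ) ^ (-(3:ℝ)/2 + ε₀))
        ≤ C * (Real.log (Real.exp 1 + t)) ^ ((1:ℝ)/2) := by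
  obtain ⟨hε0, hε2⟩ := hε
  set p : ℝ := -(3:ℝ)/2 + ε₀ with hp
  have hp1 : p + 1 < 0 := by rw [hp]; linarith
  have hpne : p ≠ -1 := by intro h; rw [h] at hp1; linarith
  have hc : (0:ℝ) < -(p+1) := by linarith
  refine ⟨1 / (-(p+1)), div_pos one_pos hc, ?_⟩
  intro t ht
  have he : (1:ℝ) ≤ Real.exp 1 := by
    have := Real.add_one_le_exp (1:ℝ); linarith
  have hlog1 : 1 ≤ Real.log (Real.exp 1 + t) := by
    have h := Real.log_le_log (Real.exp_pos 1)
      (show Real.exp 1 ≤ Real.exp 1 + t by linarith)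
    rwa [Real.log_exp] at h
  have hL : (0:ℝ) ≤ (Real.log (Real.exp 1 + t)) ^ ((1:ℝ)/2) :=
    Real.rpow_nonneg (by linarith) _
  -- continuity facts
  have hcont1 : ContinuousOn (fun σ : ℝ => (Real.log (Real.exp 1 + t - σ)) ^ ((1:ℝ)/2) * (1 + σ) ^ p) (Set.uIcc 0 t) := by
    apply ContinuousOn.mul
    · apply ContinuousOn.rpow_const
      · apply ContinuousOn.log
        · exact (continuous_const.sub continuous_id).continuousOn
        · intro x hx
          rw [Set.uIcc_of_le ht] at hx
          have := hx.2
          have h1 : (1:ℝ) ≤ Real.exp 1 + t - x := by linarith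
          linarith
      · intro x hx; right; norm_num
    · apply ContinuousOn.rpow_const
      · exact (continuous_const.add continuous_id).continuousOn
      · intro x hx
        rw [Set.uIcc_of_le ht] at hx
        left; have := hx.1; intro h; linarith [hx.1]
  have hcont2 : ContinuousOn (fun σ : ℝ => (Real.log (Real.exp 1 + t)) ^ ((1:ℝ)/2) * (1 + σ) ^ p) (Set.uIcc 0 t) := by
    apply ContinuousOn.mul continuousOn_const
    apply ContinuousOn.rpow_const
    · exact (continuous_const.add continuous_id).continuousOn
    · intro x hx
      rw [Set.uIcc_of_le ht] at hx
      left; intro h; linarith [hx.1]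
  have hmono : (∫ σ in (0:ℝ)..t,
        (Real.log (Real.exp 1 + t - σ)) ^ ((1:ℝ)/2) * (1 + σ) ^ p)
      ≤ ∫ σ in (0:ℝ)..t, (Real.log (Real.exp 1 + t)) ^ ((1:ℝ)/2) * (1 + σ) ^ p := by
    apply intervalIntegral.integral_mono_on ht
      (hcont1.intervalIntegrable) (hcont2.intervalIntegrable)
    intro x hx
    apply mul_le_mul_of_nonneg_right
    · apply Real.rpow_le_rpow
      · apply Real.log_nonneg
        have := hx.2; linarith
      · apply Real.log_le_log
        · have := hx.2; linarith [Real.exp_pos (1:ℝ)]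
        · linarith [hx.1]
      · norm_num
    · apply Real.rpow_nonneg; linarith [hx.1]
  have hI : (∫ σ in (0:ℝ)..t, (1 + σ) ^ p) ≤ 1 / (-(p+1)) := by
    have hsub : (∫ σ in (0:ℝ)..t, (1 + σ) ^ p)
        = ∫ x in (1:ℝ)..(1+t), x ^ p := by
      have h := intervalIntegral.integral_comp_add_left (a := (0:ℝ)) (b := t)
        (fun x => x ^ p) 1
      simpa using h
    rw [hsub, integral_rpow (Or.inr ⟨hpne, by
      rw [Set.uIcc_of_le (by linarith : (1:ℝ) ≤ 1+t)]
      intro h; linarith [h.1]⟩)]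
    rw [Real.one_rpow]
    have hpow : (0:ℝ) ≤ (1+t) ^ (p+1) := Real.rpow_nonneg (by linarith) _
    have hne : p + 1 ≠ 0 := ne_of_lt hp1
    have heq : ((1+t) ^ (p+1) - 1) / (p+1) = (1 - (1+t) ^ (p+1)) / (-(p+1)) := by
      rw [div_eq_div_iff hne (ne_of_gt hc)]
      ring
    rw [heq, div_le_div_iff₀ hc hc]
    nlinarith
  calc (∫ σ in (0:ℝ)..t,
        (Real.log (Real.exp 1 + t - σ)) ^ ((1:ℝ)/2) * (1 + σ) ^ p)
      ≤ ∫ σ in (0:ℝ)..t, (Real.log (Real.exp 1 + t)) ^ ((1:ℝ)/2) * (1 + σ) ^ p := hmono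
    _ = (Real.log (Real.exp 1 + t)) ^ ((1:ℝ)/2) * ∫ σ in (0:ℝ)..t, (1 + σ) ^ p := by
        rw [intervalIntegral.integral_const_mul]
    _ ≤ (Real.log (Real.exp 1 + t)) ^ ((1:ℝ)/2) * (1 / (-(p+1))) :=
        mul_le_mul_of_nonneg_left hI hL
    _ = 1 / (-(p+1)) * (Real.log (Real.exp 1 + t)) ^ ((1:ℝ)/2) := mul_comm _ _
end
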